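/- arXiv:1207.3230 — 3 statements merged into one kernel-verified Lean document; each statement's English description precedes it below -/
import Mathlib

section
/- Let g ≥ 5 and let a be an admissible Prym parameter system of genus g, and let l ≥ 1. If v ∈ Λ^l T_g(a) ⊗ H_g(a) satisfies F_l^a(v) = 0, then v lies in the subspace W spanned by the elements t_I ⊗ s_j, where I = (i_1 < ⋯ < i_l) ⊆ {1,…,g−1}, 1 ≤ j ≤ g and j ∉ I. (In other words, the kernel of the Koszul map F_l^a is contained in W.) -/
open Polynomial TensorProduct

set_option synthInstance.maxHeartbeats 1000000
set_option maxHeartbeats 1000000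

noncomputable section

/-- Pairs of polynomials: restrictions of sections to the two rational components. -/
abbrev PP : Type := Polynomial ℂ × Polynomial ℂ

/-- A subset of `ℂ^σ` is Zariski open if it is the complement of the common zero locus
of a set of polynomials. -/
def IsZariskiOpen {σ : Type} (U : Set (σ → ℂ)) : Prop :=
  ∃ S : Set (MvPolynomial σ ℂ), U = {x | ∃ p ∈ S, MvPolynomial.eval x p ≠ 0}

/-- Remove the `m`-th entry of a tuple. -/
def removeIdx {α : Type*} {l : ℕ} (m : Fin l) (v : Fin l → α) (j : Fin (l - 1)) : α :=
  if h : (j : ℕ) < (m : ℕ) then v ⟨j, by have := m.2; omega⟩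
  else v ⟨(j : ℕ) + 1, by have := j.2; have := m.2; omega⟩

/-- The generator `v 0 ∧ ⋯ ∧ v (n-1)` of the `n`-th exterior power. -/
def wedgeP (R : Type*) [CommRing R] {M : Type*} [AddCommGroup M] [Module R M]
    (n : ℕ) (v : Fin n → M) : ⋀[R]^n M :=
  ⟨ExteriorAlgebra.ιMulti R n v, ExteriorAlgebra.ιMulti_range R n (Set.mem_range_self v)⟩

/-- Componentwise multiplication by a fixed pair of polynomials, as a `ℂ`-linear map. -/
def mulPair (q : PP) : PP →ₗ[ℂ] PP := LinearMap.mulLeft ℂ q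

section Prym

variable (g : ℕ)

/-- `M_j(t) = ∏_{r=1}^{g-1} (t - a_{r,j})`. -/
def prymM (a : Fin (g - 1) × Fin 2 → ℂ) (j : Fin 2) : Polynomial ℂ :=
  ∏ r : Fin (g - 1), (X - C (a (r, j)))

/-- `A_j = ∏_{i=1}^{g-1} a_{i,j}`. -/
def prymA (a : Fin (g - 1) × Fin 2 → ℂ) (j : Fin 2) : ℂ :=
  ∏ r : Fin (g - 1), a (r, j)

/-- `d_1 = -A_1/A_2`, `d_2 = 1`. -/
def prymD (a : Fin (g - 1) × Fin 2 → ℂ) (j : Fin 2) : ℂ :=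
  if j = 0 then -(prymA g a 0) / (prymA g a 1) else 1

/-- The polynomial `p_{i,j}`: `t·M_j(t)/(t - a_{i,j})` for `i ≤ k = ⌊g/2⌋` (`1`-based) and
`-d_j·a_{i,j}·M_j(t)/(A_j (t - a_{i,j}))` for `i ≥ k+1` (all indices `0`-based in Lean). -/
def prymPoly (a : Fin (g - 1) × Fin 2 → ℂ) (i : Fin (g - 1)) (j : Fin 2) : Polynomial ℂ :=
  if (i : ℕ) < g / 2 then
    X * ∏ r ∈ Finset.univ.erase i, (X - C (a (r, j)))
  else
    C (-(prymD g a j) * a (i, j) / prymA g a j) * ∏ r ∈ Finset.univ.erase i, (X - C (a (r, j)))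

/-- The Prym-canonical section `t_i = (p_{i,1}, p_{i,2})`. -/
def prymSection (a : Fin (g - 1) × Fin 2 → ℂ) (i : Fin (g - 1)) : PP :=
  (prymPoly g a i 0, prymPoly g a i 1)

/-- The canonical sections `s_1, …, s_g`:
`s_j = (t·M_1/(t - a_{j,1}), -t·M_2/(t - a_{j,2}))` for `j ≤ g-1` and `s_g = (M_1, -M_2)`. -/
def prymCanSection (a : Fin (g - 1) × Fin 2 → ℂ) (j : Fin g) : PP :=
  if h : (j : ℕ) < g - 1 then
    (X * ∏ r ∈ Finset.univ.erase (⟨j, h⟩ : Fin (g - 1)), (X - C (a (r, 0))),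
     -(X * ∏ r ∈ Finset.univ.erase (⟨j, h⟩ : Fin (g - 1)), (X - C (a (r, 1)))))
  else (prymM g a 0, -(prymM g a 1))

/-- `T_g(a)`, the span of the Prym-canonical sections (a realization of `H⁰(C, K_C ⊗ A)`). -/
def Tspace (a : Fin (g - 1) × Fin 2 → ℂ) : Submodule ℂ PP :=
  Submodule.span ℂ (Set.range (prymSection g a))

/-- `H_g(a)`, the span of the canonical sections (a realization of `H⁰(C, K_C)`). -/
def Hspace (a : Fin (g - 1) × Fin 2 → ℂ) : Submodule ℂ PP :=
  Submodule.span ℂ (Set.range (prymCanSection g a))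

/-- `t_i` as an element of `T_g(a)`. -/
def tSec (a : Fin (g - 1) × Fin 2 → ℂ) (i : Fin (g - 1)) : Tspace g a :=
  ⟨prymSection g a i, Submodule.subset_span ⟨i, rfl⟩⟩

/-- `s_j` as an element of `H_g(a)`. -/
def sSec (a : Fin (g - 1) × Fin 2 → ℂ) (j : Fin g) : Hspace g a :=
  ⟨prymCanSection g a j, Submodule.subset_span ⟨j, rfl⟩⟩

/-- An admissible Prym parameter system of genus `g`: all entries nonzero and, for each `j`,
the `a_{1,j}, …, a_{g-1,j}` pairwise distinct. -/
def PrymAdmissible (a : Fin (g - 1) × Fin 2 → ℂ) : Prop :=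
  (∀ p, a p ≠ 0) ∧ ∀ j : Fin 2, Function.Injective fun i : Fin (g - 1) => a (i, j)

/-- `F` is the Koszul map `F_l^a : Λ^l T_g(a) ⊗ H_g(a) → Λ^{l-1} T_g(a) ⊗ (ℂ[t]×ℂ[t])`,
`v_1 ∧ ⋯ ∧ v_l ⊗ s ↦ Σ_m (-1)^m v_1 ∧ ⋯ ∧ v̂_m ∧ ⋯ ∧ v_l ⊗ (v_m · s)`. -/
def IsPrymKoszul (a : Fin (g - 1) × Fin 2 → ℂ) (l : ℕ)
    (F : (⋀[ℂ]^l (Tspace g a)) ⊗[ℂ] (Hspace g a) →ₗ[ℂ]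
         (⋀[ℂ]^(l - 1) (Tspace g a)) ⊗[ℂ] PP) : Prop :=
  ∀ (v : Fin l → Tspace g a) (s : Hspace g a),
    F ((wedgeP ℂ l v) ⊗ₜ[ℂ] s) =
      ∑ m : Fin l, ((-1 : ℂ) ^ ((m : ℕ) + 1)) •
        ((wedgeP ℂ (l - 1) (removeIdx m v)) ⊗ₜ[ℂ] ((v m : PP) * (s : PP)))

/-- The subspace `W` spanned by the `t_I ⊗ s_j` with `j ∉ I`. -/
def Wsub (a : Fin (g - 1) × Fin 2 → ℂ) (l : ℕ) :
    Submodule ℂ ((⋀[ℂ]^l (Tspace g a)) ⊗[ℂ] (Hspace g a)) :=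
  Submodule.span ℂ
    {w | ∃ (I : Fin l → Fin (g - 1)) (j : Fin g), StrictMono I ∧ (∀ m, (I m : ℕ) ≠ (j : ℕ)) ∧
      w = (wedgeP ℂ l fun m => tSec g a (I m)) ⊗ₜ[ℂ] sSec g a j}

/-- The parameter system of genus `g-1` obtained by deleting the index `r`. -/
def prymDelete (a : Fin (g - 1) × Fin 2 → ℂ) (r : Fin (g - 1)) :
    Fin (g - 1 - 1) × Fin 2 → ℂ := fun p =>
  if h : (p.1 : ℕ) < (r : ℕ) then a (⟨p.1, by have := r.2; omega⟩, p.2)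
  else a (⟨(p.1 : ℕ) + 1, by have := p.1.2; omega⟩, p.2)

end Prym

section Canonical

variable (g : ℕ)

/-- An admissible canonical parameter system of genus `g`. -/
def CanAdmissible (a : Fin g × Fin 2 → ℂ) : Prop :=
  ∀ j : Fin 2, Function.Injective fun i : Fin g => a (i, j)

/-- The canonical section `s_i = (M_1(t)/(t - a_{i,1}), -M_2(t)/(t - a_{i,2}))`. -/
def canSection (a : Fin g × Fin 2 → ℂ) (i : Fin g) : PP :=
  (∏ r ∈ Finset.univ.erase i, (X - C (a (r, 0))),
   -∏ r ∈ Finset.univ.erase i, (X - C (a (r, 1))))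

/-- `H_g(a)`, the span of the canonical sections (a realization of `H⁰(C, K_C)`). -/
def Hc (a : Fin g × Fin 2 → ℂ) : Submodule ℂ PP :=
  Submodule.span ℂ (Set.range (canSection g a))

/-- `s_i` as an element of `H_g(a)`. -/
def cSec (a : Fin g × Fin 2 → ℂ) (i : Fin g) : Hc g a :=
  ⟨canSection g a i, Submodule.subset_span ⟨i, rfl⟩⟩

/-- `F` is the Koszul map `F_l^a : Λ^l H_g(a) ⊗ H_g(a) → Λ^{l-1} H_g(a) ⊗ (ℂ[t]×ℂ[t])`. -/
def IsCanKoszul (a : Fin g × Fin 2 → ℂ) (l : ℕ)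
    (F : (⋀[ℂ]^l (Hc g a)) ⊗[ℂ] (Hc g a) →ₗ[ℂ]
         (⋀[ℂ]^(l - 1) (Hc g a)) ⊗[ℂ] PP) : Prop :=
  ∀ (v : Fin l → Hc g a) (s : Hc g a),
    F ((wedgeP ℂ l v) ⊗ₜ[ℂ] s) =
      ∑ m : Fin l, ((-1 : ℂ) ^ ((m : ℕ) + 1)) •
        ((wedgeP ℂ (l - 1) (removeIdx m v)) ⊗ₜ[ℂ] ((v m : PP) * (s : PP)))

/-- `V_{g,l}(a)`: the span of the `s_I ⊗ s_j` with `j ≥ i_1`. -/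
def Vsub (a : Fin g × Fin 2 → ℂ) (l : ℕ) :
    Submodule ℂ ((⋀[ℂ]^l (Hc g a)) ⊗[ℂ] (Hc g a)) :=
  Submodule.span ℂ
    {w | ∃ (I : Fin l → Fin g) (j : Fin g), StrictMono I ∧ (∀ m : Fin l, (m : ℕ) = 0 → I m ≤ j) ∧
      w = (wedgeP ℂ l fun m => cSec g a (I m)) ⊗ₜ[ℂ] cSec g a j}

/-- The subspace `W ⊆ V_{g,l}(a)` spanned by the `s_I ⊗ s_j` with `j ∉ I` and `j > i_1`. -/
def WsubC (a : Fin g × Fin 2 → ℂ) (l : ℕ) :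
    Submodule ℂ ((⋀[ℂ]^l (Hc g a)) ⊗[ℂ] (Hc g a)) :=
  Submodule.span ℂ
    {w | ∃ (I : Fin l → Fin g) (j : Fin g), StrictMono I ∧ (∀ m, I m ≠ j) ∧
      (∀ m : Fin l, (m : ℕ) = 0 → I m < j) ∧
      w = (wedgeP ℂ l fun m => cSec g a (I m)) ⊗ₜ[ℂ] cSec g a j}

/-- The canonical parameter system of genus `g-1` obtained by deleting the index `r`. -/
def canDelete (a : Fin g × Fin 2 → ℂ) (r : Fin g) : Fin (g - 1) × Fin 2 → ℂ := fun p =>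
  if h : (p.1 : ℕ) < (r : ℕ) then a (⟨p.1, by have := r.2; omega⟩, p.2)
  else a (⟨(p.1 : ℕ) + 1, by have := p.1.2; omega⟩, p.2)

end Canonical

/-!
Evaluating first components at `a_{i,1}` is a character `e_i` of `ℂ[t] × ℂ[t]` with
`e_i(t_r) ≠ 0` iff `r = i` and `e_i(s_j) ≠ 0` iff `j = i`. Expand `v = ∑ c_{I,j} t_I ⊗ s_j` and
let `i ∈ I`. Pairing `F(v)` against `λ_{I∖i} ⊗ e_i`, where `λ_{I∖i}` is the functional on
`Λ^{l-1} T_g(a)` dual to `t_{I∖i}`, kills every term of every `F(t_{I'} ⊗ s_{j'})` except the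
one removing `t_i` from `t_I ⊗ s_i`, which contributes `± c_{I,i} e_i(t_i) e_i(s_i)`.
Hence `c_{I,i} = 0`: only generators with `j ∉ I` survive.
-/

lemma removeIdx_comp {α β : Type*} {l : ℕ} (m : Fin l) (f : α → β) (v : Fin l → α) :
    removeIdx m (f ∘ v) = f ∘ removeIdx m v := by
  funext j
  simp only [removeIdx, Function.comp_apply]
  split_ifs <;> rfl

lemma strictMono_removeIdx {α : Type*} [Preorder α] {l : ℕ} {v : Fin l → α}
    (hv : StrictMono v) (m : Fin l) : StrictMono (removeIdx m v) := by
  intro j j' hj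
  rw [Fin.lt_def] at hj
  unfold removeIdx
  split_ifs <;> apply hv <;> simp only [Fin.mk_lt_mk] <;> omega

lemma range_eq_insert_removeIdx {α : Type*} {l : ℕ} (m : Fin l) (v : Fin l → α) :
    Set.range v = insert (v m) (Set.range (removeIdx m v)) := by
  ext x
  simp only [Set.mem_range, Set.mem_insert_iff]
  constructor
  · rintro ⟨m', rfl⟩
    rcases lt_trichotomy (m' : ℕ) m with h | h | h
    · exact Or.inr ⟨⟨m', by omega⟩, by rw [removeIdx, dif_pos h]⟩
    · exact Or.inl (congrArg v (Fin.ext h))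
    · refine Or.inr ⟨⟨m' - 1, by omega⟩, ?_⟩
      rw [removeIdx, dif_neg (by simp only; omega)]
      congr 1
      ext
      simp only
      omega
  · rintro (rfl | ⟨j, rfl⟩)
    · exact ⟨m, rfl⟩
    · unfold removeIdx
      split_ifs
      exacts [⟨_, rfl⟩, ⟨_, rfl⟩]

lemma StrictMono.eq_of_removeIdx_eq {α : Type*} [Preorder α] {l : ℕ} {a b : Fin l → α}
    (ha : StrictMono a) (hb : StrictMono b) {m m' : Fin l} (hm : a m = b m')
    (hr : removeIdx m a = removeIdx m' b) : a = b :=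
  (ha.range_inj hb).1 <| by
    rw [range_eq_insert_removeIdx m a, range_eq_insert_removeIdx m' b, hm, hr]

def OrderEmbedding.removeIdx {α : Type*} [Preorder α] {l : ℕ} (m : Fin l) (a : Fin l ↪o α) :
    Fin (l - 1) ↪o α :=
  OrderEmbedding.ofStrictMono (_root_.removeIdx m a) (strictMono_removeIdx a.strictMono m)

@[simp]
lemma OrderEmbedding.coe_removeIdx {α : Type*} [Preorder α] {l : ℕ} (m : Fin l)
    (a : Fin l ↪o α) : ⇑(a.removeIdx m) = _root_.removeIdx m a :=
  rfl

section ExteriorPower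

open Submodule

variable {R M N ι : Type*} [CommRing R] [AddCommGroup M] [Module R M] [AddCommGroup N]
  [Module R N]

lemma span_range_inclusion_eq_top (v : ι → M) :
    span R (Set.range fun i => (⟨v i, subset_span (Set.mem_range_self i)⟩ : span R (Set.range v)))
      = ⊤ := by
  apply map_injective_of_injective (span R (Set.range v)).injective_subtype
  rw [map_span, Submodule.map_top, range_subtype, ← Set.range_comp]
  rfl

lemma span_image2_tmul_eq_top {s : Set M} {t : Set N} (hs : span R s = ⊤) (ht : span R t = ⊤) :
    span R (Set.image2 (· ⊗ₜ[R] ·) s t) = ⊤ := by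
  have h := map₂_span_span R (TensorProduct.mk R M N) s t
  rw [hs, ht, TensorProduct.map₂_mk_top_top_eq_top] at h
  exact h.symm

variable [LinearOrder ι]

lemma span_range_wedgeP_comp_eq_top {x : ι → M} (hx : span R (Set.range x) = ⊤) (n : ℕ) :
    span R (Set.range fun a : Fin n ↪o ι => wedgeP R n (x ∘ a)) = ⊤ := by
  rw [← exteriorPower.ιMulti_family_span_of_span R (n := n) hx]
  congr 1
  exact (Set.powersetCard.ofFinEmbEquiv.symm.surjective.range_comp _).symm

lemma pairingDual_ιMulti_wedgeP {x : ι → M} {f : ι → Module.Dual R M}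
    (h₁ : ∀ i, f i (x i) = 1) (h₀ : ∀ ⦃i j⦄, i ≠ j → f i (x j) = 0) {n : ℕ} (a b : Fin n ↪o ι) :
    exteriorPower.pairingDual R M n (exteriorPower.ιMulti R n (f ∘ a)) (wedgeP R n (x ∘ b)) =
      if a = b then 1 else 0 := by
  split_ifs with h
  · subst h
    exact exteriorPower.pairingDual_apply_apply_eq_one x f h₁ h₀ n a
  · exact exteriorPower.pairingDual_apply_apply_eq_one_zero x f h₀ n a b h

end ExteriorPower

section KoszulKernel

open Submodule

variable {K R ι κ : Type*} [Field K] [CommRing R] [Algebra K R]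

def IsKoszulMap (T H : Submodule K R) (l : ℕ)
    (F : (⋀[K]^l T) ⊗[K] H →ₗ[K] (⋀[K]^(l - 1) T) ⊗[K] R) : Prop :=
  ∀ (v : Fin l → T) (s : H),
    F ((wedgeP K l v) ⊗ₜ[K] s) =
      ∑ m : Fin l, ((-1 : K) ^ ((m : ℕ) + 1)) •
        ((wedgeP K (l - 1) (removeIdx m v)) ⊗ₜ[K] ((v m : R) * (s : R)))

variable {T H : Submodule K R} {e : ι → R →ₐ[K] K} {t : ι → T} {s : κ → H} {μ : ι → κ}

variable (e t) in
def characterCoord (i : ι) : Module.Dual K T :=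
  (e i (t i))⁻¹ • ((e i).toLinearMap ∘ₗ T.subtype)

lemma characterCoord_apply (i : ι) (x : T) :
    characterCoord e t i x = (e i (t i))⁻¹ * e i x :=
  rfl

lemma characterCoord_self (het : ∀ i r, e i (t r) ≠ 0 ↔ r = i) (i : ι) :
    characterCoord e t i (t i) = 1 :=
  inv_mul_cancel₀ ((het i i).2 rfl)

lemma characterCoord_of_ne (het : ∀ i r, e i (t r) ≠ 0 ↔ r = i) {i r : ι} (hir : i ≠ r) :
    characterCoord e t i (t r) = 0 := by
  rw [characterCoord_apply, not_ne_iff.1 (mt (het i r).1 (Ne.symm hir)), mul_zero]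

variable [LinearOrder ι]

variable (e t) in
def koszulTest {l : ℕ} (a : Fin l ↪o ι) (m₀ : Fin l) :
    Module.Dual K ((⋀[K]^(l - 1) T) ⊗[K] R) :=
  TensorProduct.dualDistrib K _ _
    (exteriorPower.pairingDual K T (l - 1)
        (exteriorPower.ιMulti K (l - 1) (characterCoord e t ∘ a.removeIdx m₀)) ⊗ₜ
      (e (a m₀)).toLinearMap)

lemma koszulTest_tmul {l : ℕ} (a : Fin l ↪o ι) (m₀ : Fin l) (w : ⋀[K]^(l - 1) T) (r : R) :
    koszulTest e t a m₀ (w ⊗ₜ r) =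
      exteriorPower.pairingDual K T (l - 1)
        (exteriorPower.ιMulti K (l - 1) (characterCoord e t ∘ a.removeIdx m₀)) w * e (a m₀) r :=
  rfl

open Classical in
lemma koszulTest_apply_generator (het : ∀ i r, e i (t r) ≠ 0 ↔ r = i)
    (hes : ∀ i k, e i (s k) ≠ 0 ↔ k = μ i) {l : ℕ}
    {F : (⋀[K]^l T) ⊗[K] H →ₗ[K] (⋀[K]^(l - 1) T) ⊗[K] R} (hF : IsKoszulMap T H l F)
    (a b : Fin l ↪o ι) (m₀ : Fin l) (k : κ) :
    koszulTest e t a m₀ (F (wedgeP K l (t ∘ b) ⊗ₜ s k)) =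
      if (b, k) = (a, μ (a m₀)) then
        (-1 : K) ^ ((m₀ : ℕ) + 1) * (e (a m₀) (t (a m₀)) * e (a m₀) (s (μ (a m₀))))
      else 0 := by
  set i := a m₀
  have hsupport : ∀ m, (if a.removeIdx m₀ = b.removeIdx m then (1 : K) else 0) *
      (e i (t (b m)) * e i (s k)) ≠ 0 → b = a ∧ m = m₀ ∧ k = μ i := by
    intro m hm
    simp only [ne_eq, mul_eq_zero, ite_eq_right_iff, not_or, not_forall] at hm
    obtain ⟨⟨hab, -⟩, hbm, hsk⟩ := hm
    have hbm : b m = i := (het i (b m)).1 hbm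
    have hba : b = a := DFunLike.coe_injective <| b.strictMono.eq_of_removeIdx_eq a.strictMono
      hbm (congrArg DFunLike.coe hab).symm
    subst hba
    exact ⟨rfl, b.injective hbm, (hes i k).1 hsk⟩
  rw [hF, map_sum]
  simp only [map_smul, smul_eq_mul, koszulTest_tmul, removeIdx_comp, map_mul]
  simp_rw [← OrderEmbedding.coe_removeIdx, pairingDual_ιMulti_wedgeP (characterCoord_self het)
    (fun _ _ => characterCoord_of_ne het), Function.comp_apply]
  rw [Finset.sum_eq_single m₀ (fun m _ hm => ?_) (by simp)]
  · by_cases hbk : (b, k) = (a, μ i)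
    · obtain ⟨rfl, rfl⟩ := Prod.mk.inj hbk
      simp [i]
    · rw [if_neg hbk]
      refine mul_eq_zero_of_right _ (not_ne_iff.1 fun h => hbk ?_)
      obtain ⟨rfl, -, rfl⟩ := hsupport m₀ h
      rfl
  · exact mul_eq_zero_of_right _ (not_ne_iff.1 fun h => hm (hsupport m h).2.1)

theorem mem_span_of_isKoszulMap_apply_eq_zero (ht : span K (Set.range t) = ⊤)
    (hs : span K (Set.range s) = ⊤) (het : ∀ i r, e i (t r) ≠ 0 ↔ r = i)
    (hes : ∀ i k, e i (s k) ≠ 0 ↔ k = μ i) {l : ℕ}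
    {F : (⋀[K]^l T) ⊗[K] H →ₗ[K] (⋀[K]^(l - 1) T) ⊗[K] R} (hF : IsKoszulMap T H l F)
    {v : (⋀[K]^l T) ⊗[K] H} (hv : F v = 0) :
    v ∈ span K {w | ∃ (a : Fin l ↪o ι) (k : κ), (∀ m, μ (a m) ≠ k) ∧
      w = wedgeP K l (t ∘ a) ⊗ₜ s k} := by
  classical
  set G : (Fin l ↪o ι) × κ → (⋀[K]^l T) ⊗[K] H := fun p => wedgeP K l (t ∘ p.1) ⊗ₜ s p.2
  have hG : span K (Set.range G) = ⊤ := by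
    have h := span_image2_tmul_eq_top (span_range_wedgeP_comp_eq_top ht l) hs
    rwa [Set.image2_range] at h
  obtain ⟨c, rfl⟩ := Finsupp.mem_span_range_iff_exists_finsupp.1 (hG ▸ mem_top : v ∈ span K _)
  have hc : ∀ a m₀, c (a, μ (a m₀)) = 0 := by
    intro a m₀
    have h := congrArg (koszulTest e t a m₀) hv
    simp only [Finsupp.sum, map_sum, map_smul, smul_eq_mul, G,
      koszulTest_apply_generator het hes hF, mul_ite, mul_zero, Finset.sum_ite_eq',
      map_zero] at h
    split_ifs at h with hmem
    · refine (mul_eq_zero.1 h).resolve_right (mul_ne_zero (by simp) (mul_ne_zero ?_ ?_))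
      exacts [(het _ _).2 rfl, (hes _ _).2 rfl]
    · exact Finsupp.notMem_support_iff.1 hmem
  refine sum_mem fun ⟨a, k⟩ hak => smul_mem _ _ (subset_span ⟨a, k, fun m hm => ?_, rfl⟩)
  exact Finsupp.mem_support_iff.1 hak (hm ▸ hc a m)

end KoszulKernel

lemma eval_prod_erase_ne_zero_iff {F : Type*} [CommRing F] [IsDomain F] {n : ℕ} {b : Fin n → F}
    (hb : Function.Injective b) (i q : Fin n) :
    (∏ r ∈ Finset.univ.erase q, (X - C (b r))).eval (b i) ≠ 0 ↔ i = q := by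
  simp only [eval_prod, eval_sub, eval_X, eval_C, ne_eq, Finset.prod_ne_zero_iff,
    Finset.mem_erase, Finset.mem_univ, and_true, sub_eq_zero, hb.eq_iff]
  refine ⟨fun h => by_contra fun hiq => h i hiq rfl, fun h r hr hir => hr (hir ▸ h)⟩

section Prym

variable {g : ℕ} {a : Fin (g - 1) × Fin 2 → ℂ}

lemma prymA_ne_zero (ha : PrymAdmissible g a) (j : Fin 2) : prymA g a j ≠ 0 :=
  Finset.prod_ne_zero_iff.mpr fun r _ => ha.1 (r, j)

lemma prymD_ne_zero (ha : PrymAdmissible g a) (j : Fin 2) : prymD g a j ≠ 0 := by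
  unfold prymD
  split_ifs
  · exact div_ne_zero (neg_ne_zero.mpr (prymA_ne_zero ha 0)) (prymA_ne_zero ha 1)
  · exact one_ne_zero

def evalFst (x : ℂ) : PP →ₐ[ℂ] ℂ :=
  (Polynomial.aeval x).comp (AlgHom.fst ℂ ℂ[X] ℂ[X])

lemma evalFst_apply (x : ℂ) (q : PP) : evalFst x q = q.1.eval x := by
  simp [evalFst]

lemma evalFst_tSec_ne_zero_iff (ha : PrymAdmissible g a) (i r : Fin (g - 1)) :
    evalFst (a (i, 0)) (tSec g a r) ≠ 0 ↔ r = i := by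
  rw [evalFst_apply]
  change (prymPoly g a r 0).eval _ ≠ 0 ↔ _
  unfold prymPoly
  split_ifs
  · rw [eval_mul, eval_X, mul_ne_zero_iff, eval_prod_erase_ne_zero_iff (ha.2 0),
      and_iff_right (ha.1 _), eq_comm]
  · rw [eval_mul, eval_C, mul_ne_zero_iff, eval_prod_erase_ne_zero_iff (ha.2 0),
      and_iff_right (by simp [ha.1, prymA_ne_zero ha, prymD_ne_zero ha]), eq_comm]

lemma evalFst_sSec_ne_zero_iff (ha : PrymAdmissible g a) (i : Fin (g - 1)) (k : Fin g) :
    evalFst (a (i, 0)) (sSec g a k) ≠ 0 ↔ k = Fin.castLE (Nat.sub_le g 1) i := by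
  rw [evalFst_apply]
  change (prymCanSection g a k).1.eval _ ≠ 0 ↔ _
  unfold prymCanSection
  split_ifs with hk
  · rw [eval_mul, eval_X, mul_ne_zero_iff, eval_prod_erase_ne_zero_iff (ha.2 0),
      and_iff_right (ha.1 _)]
    simp [Fin.ext_iff, eq_comm]
  · simp only [prymM, eval_prod, eval_sub, eval_X, eval_C, ne_eq, Finset.prod_ne_zero_iff,
      Finset.mem_univ, true_implies, sub_eq_zero, Fin.ext_iff, Fin.val_castLE]
    exact iff_of_false (fun h => h i rfl) (by have := i.2; omega)

end Prym

theorem statement0_general (g : ℕ) (a : Fin (g - 1) × Fin 2 → ℂ)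
    (ha : PrymAdmissible g a) (l : ℕ)
    (F : (⋀[ℂ]^l (Tspace g a)) ⊗[ℂ] (Hspace g a) →ₗ[ℂ]
         (⋀[ℂ]^(l - 1) (Tspace g a)) ⊗[ℂ] PP)
    (hF : IsPrymKoszul g a l F)
    (v : (⋀[ℂ]^l (Tspace g a)) ⊗[ℂ] (Hspace g a)) (hv : F v = 0) :
    v ∈ Wsub g a l := by
  have hker := mem_span_of_isKoszulMap_apply_eq_zero (span_range_inclusion_eq_top _)
    (span_range_inclusion_eq_top _) (e := fun i => evalFst (a (i, 0))) (t := tSec g a)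
    (s := sSec g a) (μ := Fin.castLE (Nat.sub_le g 1))
    (evalFst_tSec_ne_zero_iff ha) (evalFst_sSec_ne_zero_iff ha) hF hv
  refine Submodule.span_mono ?_ hker
  rintro _ ⟨b, k, hbk, rfl⟩
  exact ⟨b, k, b.strictMono, fun m hm => hbk m (Fin.ext hm), rfl⟩

/-- Lemma on the kernel of the Prym Koszul map, Lemma 3.1 / "Lemma W":
for `g ≥ 5`, an admissible Prym parameter system `a` of genus `g` and `l ≥ 1`, the kernel of
the Koszul map `F_l^a` is contained in the span `W` of the `t_I ⊗ s_j` with `j ∉ I`. -/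
theorem statement0 (g : ℕ) (hg : 5 ≤ g) (a : Fin (g - 1) × Fin 2 → ℂ)
    (ha : PrymAdmissible g a) (l : ℕ) (hl : 1 ≤ l)
    (F : (⋀[ℂ]^l (Tspace g a)) ⊗[ℂ] (Hspace g a) →ₗ[ℂ]
         (⋀[ℂ]^(l - 1) (Tspace g a)) ⊗[ℂ] PP)
    (hF : IsPrymKoszul g a l F)
    (v : (⋀[ℂ]^l (Tspace g a)) ⊗[ℂ] (Hspace g a)) (hv : F v = 0) :
    v ∈ Wsub g a l :=
  statement0_general g a ha l F hF v hv
end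
end

section
/- (Projection of the Prym-canonical model from a node.) Let g ≥ 6, k = ⌊g/2⌋, let a be an admissible Prym parameter system of genus g, and let r be an index with 1 ≤ r ≤ k if g is even, and k+1 ≤ r ≤ g−1 if g is odd. Let a′ be the admissible Prym parameter system of genus g−1 defined by a′_{i,j} = a_{i,j} for i ≤ r−1 and a′_{i,j} = a_{i+1,j} for i ≥ r (j = 1,2), and let σ(i) = i for i < r, σ(i) = i−1 for i > r. Then for every i ≠ r (1 ≤ i ≤ g−1) and j = 1,2 one has p^a_{i,j}(t) = c_i · (t − a_{r,j}) · p^{a′}_{σ(i),j}(t), where c_i = 1 if i ≤ k and c_i = 1/a_{r,2} if i ≥ k+1. In particular, componentwise multiplication by (t−a_{r,1}, t−a_{r,2}) maps T_{g−1}(a′) injectively into T_g(a), sending the basis vector t^{a′}_{σ(i)} to c_i^{−1} t^a_i. -/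
open Polynomial TensorProduct

set_option synthInstance.maxHeartbeats 1000000
set_option maxHeartbeats 1000000

noncomputable section

/-! Deleting the node `P_r` removes the factor `t - a_{r,j}` from `M_j` and the factor `a_{r,j}`
from `A_j`. For `i ≥ k+1` the constant in front of `M_j/(t - a_{i,j})` is `-(d_j/A_j)·a_{i,j}`,
and `d_j/A_j = ∓1/A_2` for both `j`, so it changes by the same factor `1/a_{r,2}` on both
components. The parity condition on `r` is exactly what makes the shift `σ` respect the
thresholds: `i ≤ k` iff `σ(i) ≤ k'`. -/

section SkipIndex

variable {n : ℕ}

def skipIndex (r : Fin n) (s : Fin (n - 1)) : Fin n :=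
  if (s : ℕ) < r then ⟨s, by omega⟩ else ⟨s + 1, by omega⟩

theorem skipIndex_val (r : Fin n) (s : Fin (n - 1)) :
    (skipIndex r s : ℕ) = if (s : ℕ) < r then (s : ℕ) else s + 1 := by
  unfold skipIndex; split_ifs <;> rfl

theorem skipIndex_injective (r : Fin n) : Function.Injective (skipIndex r) := by
  intro s t h
  rw [Fin.ext_iff, skipIndex_val, skipIndex_val] at h
  ext; split_ifs at h <;> omega

theorem skipIndex_ne (r : Fin n) (s : Fin (n - 1)) : skipIndex r s ≠ r := by
  rw [ne_eq, Fin.ext_iff, skipIndex_val]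
  split_ifs <;> omega

theorem skipIndex_eq {r i : Fin n} {s : Fin (n - 1)} (hir : i ≠ r)
    (hlt : (i : ℕ) < r → (s : ℕ) = i) (hgt : (r : ℕ) < i → (s : ℕ) + 1 = i) :
    skipIndex r s = i := by
  have : (i : ℕ) ≠ r := Fin.val_ne_of_ne hir
  ext; rw [skipIndex_val]; split_ifs <;> omega

theorem map_univ_skipIndex (r : Fin n) :
    Finset.univ.map ⟨skipIndex r, skipIndex_injective r⟩ = Finset.univ.erase r := by
  ext i
  simp only [Finset.mem_map, Finset.mem_univ, true_and, Finset.mem_erase, and_true,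
    Function.Embedding.coeFn_mk]
  constructor
  · rintro ⟨s, rfl⟩
    exact skipIndex_ne r s
  · intro hir
    have : (i : ℕ) ≠ r := Fin.val_ne_of_ne hir
    by_cases hi : (i : ℕ) < r
    · exact ⟨⟨i, by omega⟩, skipIndex_eq hir (fun _ => rfl) (by omega)⟩
    · exact ⟨⟨i - 1, by omega⟩, skipIndex_eq hir (by omega) (fun _ => by simp only; omega)⟩

theorem prod_univ_eq_mul_prod_skipIndex {M : Type*} [CommMonoid M] (f : Fin n → M)
    (r : Fin n) : ∏ i, f i = f r * ∏ s, f (skipIndex r s) := by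
  rw [← Finset.mul_prod_erase _ f (Finset.mem_univ r), ← map_univ_skipIndex, Finset.prod_map]
  rfl

theorem prod_erase_skipIndex {M : Type*} [CommMonoid M] (f : Fin n → M) (r : Fin n)
    (s : Fin (n - 1)) :
    ∏ i ∈ Finset.univ.erase (skipIndex r s), f i =
      f r * ∏ t ∈ Finset.univ.erase s, f (skipIndex r t) := by
  have hr : r ∈ Finset.univ.erase (skipIndex r s) :=
    Finset.mem_erase.mpr ⟨(skipIndex_ne r s).symm, Finset.mem_univ r⟩
  let e : Fin (n - 1) ↪ Fin n := ⟨skipIndex r, skipIndex_injective r⟩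
  calc ∏ i ∈ Finset.univ.erase (skipIndex r s), f i
      = f r * ∏ i ∈ (Finset.univ.erase r).erase (e s), f i := by
        rw [← Finset.mul_prod_erase _ f hr, Finset.erase_right_comm]; rfl
    _ = f r * ∏ t ∈ Finset.univ.erase s, f (skipIndex r t) := by
        rw [← map_univ_skipIndex, ← Finset.map_erase, Finset.prod_map]; rfl

end SkipIndex

section Deletion

variable {g : ℕ} (a : Fin (g - 1) × Fin 2 → ℂ) (r : Fin (g - 1))

theorem prymDelete_apply (s : Fin (g - 1 - 1)) (j : Fin 2) :
    prymDelete g a r (s, j) = a (skipIndex r s, j) := by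
  unfold prymDelete skipIndex; split_ifs <;> rfl

theorem prymA_eq_mul_prymA_prymDelete (j : Fin 2) :
    prymA g a j = a (r, j) * prymA (g - 1) (prymDelete g a r) j := by
  simp only [prymA, prymDelete_apply]
  exact prod_univ_eq_mul_prod_skipIndex (fun i => a (i, j)) r

theorem prod_erase_skipIndex_prymDelete (s : Fin (g - 1 - 1)) (j : Fin 2) :
    ∏ i ∈ Finset.univ.erase (skipIndex r s), (X - C (a (i, j))) =
      (X - C (a (r, j))) * ∏ t ∈ Finset.univ.erase s, (X - C (prymDelete g a r (t, j))) := by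
  simp only [prymDelete_apply]
  exact prod_erase_skipIndex (fun i => X - C (a (i, j))) r s

end Deletion

theorem prymD_div_prymA {g : ℕ} {a : Fin (g - 1) × Fin 2 → ℂ} (ha0 : prymA g a 0 ≠ 0)
    (j : Fin 2) :
    prymD g a j / prymA g a j = (if j = 0 then -1 else 1) / prymA g a 1 := by
  fin_cases j
  · simp only [prymD, Fin.zero_eta, if_true]
    field_simp
  · simp [prymD]

section Projection

variable {g : ℕ} {a : Fin (g - 1) × Fin 2 → ℂ} {r : Fin (g - 1)}

theorem prymPoly_skipIndex (ha0 : prymA g a 0 ≠ 0) (s : Fin (g - 1 - 1)) (j : Fin 2)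
    (hk : (skipIndex r s : ℕ) < g / 2 ↔ (s : ℕ) < (g - 1) / 2) :
    prymPoly g a (skipIndex r s) j =
      C (if (skipIndex r s : ℕ) < g / 2 then 1 else (a (r, 1))⁻¹) *
        ((X - C (a (r, j))) * prymPoly (g - 1) (prymDelete g a r) s j) := by
  have hprod := prod_erase_skipIndex_prymDelete a r s j
  unfold prymPoly
  by_cases hi : (skipIndex r s : ℕ) < g / 2
  · rw [if_pos hi, if_pos (hk.mp hi), if_pos hi, hprod, map_one, one_mul]
    ring
  · rw [if_neg hi, if_neg (mt hk.mpr hi), if_neg hi, hprod]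
    have hA := prymA_eq_mul_prymA_prymDelete a r
    have ha0' : prymA (g - 1) (prymDelete g a r) 0 ≠ 0 := right_ne_zero_of_mul (hA 0 ▸ ha0)
    have hcoeff : -prymD g a j * a (skipIndex r s, j) / prymA g a j =
        (a (r, 1))⁻¹ * (-prymD (g - 1) (prymDelete g a r) j * prymDelete g a r (s, j) /
          prymA (g - 1) (prymDelete g a r) j) := by
      rw [neg_mul, neg_mul, neg_div, neg_div, mul_div_right_comm, mul_div_right_comm,
        prymD_div_prymA ha0, prymD_div_prymA ha0', hA 1, prymDelete_apply]
      ring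
    rw [hcoeff, C_mul]
    ring

theorem skipIndex_lt_half_iff (hrE : Even g → (r : ℕ) < g / 2)
    (hrO : Odd g → g / 2 ≤ (r : ℕ)) (s : Fin (g - 1 - 1)) :
    (skipIndex r s : ℕ) < g / 2 ↔ (s : ℕ) < (g - 1) / 2 := by
  have := r.2
  rw [skipIndex_val]
  rcases Nat.even_or_odd g with hg | hg
  · have := hrE hg; have := Nat.even_iff.mp hg
    split_ifs <;> omega
  · have := hrO hg; have := Nat.odd_iff.mp hg
    split_ifs <;> omega

theorem mulPair_prymSection_prymDelete (ha0 : prymA g a 0 ≠ 0) (hr1 : a (r, 1) ≠ 0)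
    (s : Fin (g - 1 - 1)) (hk : (skipIndex r s : ℕ) < g / 2 ↔ (s : ℕ) < (g - 1) / 2) :
    mulPair (X - C (a (r, 0)), X - C (a (r, 1))) (prymSection (g - 1) (prymDelete g a r) s) =
      (if (skipIndex r s : ℕ) < g / 2 then (1 : ℂ) else (a (r, 1))⁻¹)⁻¹ •
        prymSection g a (skipIndex r s) := by
  have hc : (if (skipIndex r s : ℕ) < g / 2 then (1 : ℂ) else (a (r, 1))⁻¹) ≠ 0 := by
    split_ifs
    exacts [one_ne_zero, inv_ne_zero hr1]
  have key (j : Fin 2) : (X - C (a (r, j))) * prymPoly (g - 1) (prymDelete g a r) s j =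
      (if (skipIndex r s : ℕ) < g / 2 then (1 : ℂ) else (a (r, 1))⁻¹)⁻¹ •
        prymPoly g a (skipIndex r s) j := by
    rw [prymPoly_skipIndex ha0 s j hk, smul_eq_C_mul, ← mul_assoc, ← C_mul,
      inv_mul_cancel₀ hc, map_one, one_mul]
  exact Prod.ext (key 0) (key 1)

end Projection

theorem mulPair_injective {q : PP} (h1 : q.1 ≠ 0) (h2 : q.2 ≠ 0) :
    Function.Injective (mulPair q) := fun _ _ h =>
  Prod.ext (mul_left_cancel₀ h1 (congrArg Prod.fst h)) (mul_left_cancel₀ h2 (congrArg Prod.snd h))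

theorem statement10_general (g : ℕ) (a : Fin (g - 1) × Fin 2 → ℂ)
    (ha : PrymAdmissible g a) (r : Fin (g - 1))
    (hrE : Even g → (r : ℕ) < g / 2) (hrO : Odd g → g / 2 ≤ (r : ℕ)) :
    (∀ i : Fin (g - 1), i ≠ r → ∀ (j : Fin 2) (i' : Fin (g - 1 - 1)),
      ((i : ℕ) < (r : ℕ) → (i' : ℕ) = (i : ℕ)) →
      ((r : ℕ) < (i : ℕ) → (i' : ℕ) + 1 = (i : ℕ)) →
      prymPoly g a i j =
        C (if (i : ℕ) < g / 2 then 1 else (a (r, 1))⁻¹) *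
          ((X - C (a (r, j))) * prymPoly (g - 1) (prymDelete g a r) i' j)) ∧
    (∀ x ∈ Tspace (g - 1) (prymDelete g a r),
      mulPair (X - C (a (r, 0)), X - C (a (r, 1))) x ∈ Tspace g a) ∧
    Set.InjOn (mulPair (X - C (a (r, 0)), X - C (a (r, 1))))
      (Tspace (g - 1) (prymDelete g a r) : Set PP) ∧
    (∀ i : Fin (g - 1), i ≠ r → ∀ i' : Fin (g - 1 - 1),
      ((i : ℕ) < (r : ℕ) → (i' : ℕ) = (i : ℕ)) →
      ((r : ℕ) < (i : ℕ) → (i' : ℕ) + 1 = (i : ℕ)) →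
      mulPair (X - C (a (r, 0)), X - C (a (r, 1)))
          (prymSection (g - 1) (prymDelete g a r) i') =
        (if (i : ℕ) < g / 2 then (1 : ℂ) else (a (r, 1))⁻¹)⁻¹ • prymSection g a i) := by
  have ha0 : prymA g a 0 ≠ 0 := Finset.prod_ne_zero_iff.mpr fun _ _ => ha.1 _
  have hk := skipIndex_lt_half_iff hrE hrO
  have hsec (s : Fin (g - 1 - 1)) := mulPair_prymSection_prymDelete ha0 (ha.1 (r, 1)) s (hk s)
  refine ⟨?_, ?_, ?_, ?_⟩
  · rintro i hir j i' hlt hgt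
    rw [← skipIndex_eq hir hlt hgt]
    exact prymPoly_skipIndex ha0 i' j (hk i')
  · have hle : Tspace (g - 1) (prymDelete g a r) ≤
        (Tspace g a).comap (mulPair (X - C (a (r, 0)), X - C (a (r, 1)))) := by
      rw [Tspace, Submodule.span_le]
      rintro _ ⟨s, rfl⟩
      rw [SetLike.mem_coe, Submodule.mem_comap, hsec s]
      exact Submodule.smul_mem _ _ (Submodule.subset_span ⟨_, rfl⟩)
    exact fun x hx => hle hx
  · exact (mulPair_injective (X_sub_C_ne_zero _) (X_sub_C_ne_zero _)).injOn
  · rintro i hir i' hlt hgt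
    rw [← skipIndex_eq hir hlt hgt]
    exact hsec i'

/-- projection of the Prym-canonical model from the node `P_r`: with
`a'` the deleted parameter system and `σ(i)` the index shift (`σ(i) = i` for `i < r`,
`σ(i) = i - 1` for `i > r`, encoded by the hypotheses on `i'`), one has
`p^a_{i,j} = c_i (t - a_{r,j}) p^{a'}_{σ(i),j}` with `c_i = 1` for `i ≤ k` and
`c_i = 1/a_{r,2}` for `i ≥ k+1`; in particular componentwise multiplication by
`(t - a_{r,1}, t - a_{r,2})` maps `T_{g-1}(a')` injectively into `T_g(a)` and sends
`t^{a'}_{σ(i)}` to `c_i⁻¹ t^a_i`. -/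
theorem statement10 (g : ℕ) (hg : 6 ≤ g) (a : Fin (g - 1) × Fin 2 → ℂ)
    (ha : PrymAdmissible g a) (r : Fin (g - 1))
    (hrE : Even g → (r : ℕ) < g / 2) (hrO : Odd g → g / 2 ≤ (r : ℕ)) :
    (∀ i : Fin (g - 1), i ≠ r → ∀ (j : Fin 2) (i' : Fin (g - 1 - 1)),
      ((i : ℕ) < (r : ℕ) → (i' : ℕ) = (i : ℕ)) →
      ((r : ℕ) < (i : ℕ) → (i' : ℕ) + 1 = (i : ℕ)) →
      prymPoly g a i j =
        C (if (i : ℕ) < g / 2 then 1 else (a (r, 1))⁻¹) *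
          ((X - C (a (r, j))) * prymPoly (g - 1) (prymDelete g a r) i' j)) ∧
    (∀ x ∈ Tspace (g - 1) (prymDelete g a r),
      mulPair (X - C (a (r, 0)), X - C (a (r, 1))) x ∈ Tspace g a) ∧
    Set.InjOn (mulPair (X - C (a (r, 0)), X - C (a (r, 1))))
      (Tspace (g - 1) (prymDelete g a r) : Set PP) ∧
    (∀ i : Fin (g - 1), i ≠ r → ∀ i' : Fin (g - 1 - 1),
      ((i : ℕ) < (r : ℕ) → (i' : ℕ) = (i : ℕ)) →
      ((r : ℕ) < (i : ℕ) → (i' : ℕ) + 1 = (i : ℕ)) →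
      mulPair (X - C (a (r, 0)), X - C (a (r, 1)))
          (prymSection (g - 1) (prymDelete g a r) i') =
        (if (i : ℕ) < g / 2 then (1 : ℂ) else (a (r, 1))⁻¹)⁻¹ • prymSection g a i) :=
  statement10_general g a ha r hrE hrO
end
end

section
/- Let g ≥ 5 and let a be an admissible Prym parameter system of genus g. Then the g canonical sections s_1,…,s_g are linearly independent, and their span H_g(a) equals the space of all pairs (f_1, f_2) of polynomials of degree ≤ g−1 satisfying the residue conditions: f_1(a_{i,1})/(a_{i,1}·∏_{r≠i}(a_{i,1}−a_{r,1})) + f_2(a_{i,2})/(a_{i,2}·∏_{r≠i}(a_{i,2}−a_{r,2})) = 0 for each i = 1,…,g−1, and f_1(0)/M_1(0) + f_2(0)/M_2(0) = 0. In particular this space has dimension exactly g (it realizes H^0(C, ω_C), the space of sections of the dualizing sheaf of the binary curve C of genus g determined by a, described as pairs of meromorphic differentials f_j(t)dt/(t·M_j(t)) with opposite residues at the identified nodes). -/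
open Polynomial TensorProduct

set_option synthInstance.maxHeartbeats 1000000
set_option maxHeartbeats 1000000

noncomputable section

/-
Put `N_j(t) = t·M_j(t)`, whose roots are the `g` points `0, a_{1,j}, …, a_{g-1,j}`. The components
of `s_k` are `±N_j(t)/(t - x)` for the `k`-th root `x` of `N_j`, so they vanish at every other root
of `N_j`: this gives linear independence and, directly, the residue conditions. Conversely, a pair
in the residue space whose first component vanishes at the `g` roots of `N_1` is zero: the first
component has degree `< g`, and then the residue conditions force the second one to vanish at the
`g` roots of `N_2`. So the residue space embeds in `ℂ^g` and contains the `g`-dimensional `H_g(a)`.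
-/

open Finset Lagrange

theorem Polynomial.eq_zero_of_degree_le_of_eval_zero_of_eval_eq_zero {R : Type*} [CommRing R]
    [IsDomain R] {n : ℕ} {b : Fin n → R} (hb : Function.Injective b) (hb0 : ∀ r, b r ≠ 0)
    {p : R[X]} (hp : p.degree ≤ n) (h0 : p.eval 0 = 0) (hb_root : ∀ r, p.eval (b r) = 0) :
    p = 0 :=
  eq_zero_of_natDegree_lt_card_of_eval_eq_zero p
    (Fin.cons_injective_iff.2 ⟨fun ⟨r, hr⟩ => hb0 r hr, hb⟩) (Fin.cases h0 hb_root)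
    (by simpa [Nat.lt_succ_iff] using natDegree_le_of_degree_le hp)

section PrymCanonical

variable {K : Type*} [Field K] {g : ℕ}

def prymCanPoly (b : Fin (g - 1) → K) (k : Fin g) : K[X] :=
  if h : (k : ℕ) < g - 1 then X * nodal (univ.erase ⟨k, h⟩) b else nodal univ b

lemma prymCanSection_eq (a : Fin (g - 1) × Fin 2 → ℂ) (k : Fin g) :
    prymCanSection g a k =
      (prymCanPoly (fun r => a (r, 0)) k, -prymCanPoly (fun r => a (r, 1)) k) := by
  unfold prymCanSection prymCanPoly
  split_ifs <;> rfl

lemma prymM_eq_nodal (a : Fin (g - 1) × Fin 2 → ℂ) (j : Fin 2) :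
    prymM g a j = nodal univ fun r => a (r, j) :=
  rfl

lemma prymCanPoly_eval_node (b : Fin (g - 1) → K) (k : Fin g) (i : Fin (g - 1)) :
    (prymCanPoly b k).eval (b i) =
      if (k : ℕ) = i then b i * ∏ r ∈ univ.erase i, (b i - b r) else 0 := by
  unfold prymCanPoly
  split_ifs with hk hki hki
  · obtain rfl : (⟨k, hk⟩ : Fin (g - 1)) = i := Fin.ext hki
    rw [eval_mul, eval_X, eval_nodal]
  · have hi : i ∈ univ.erase ⟨k, hk⟩ :=
      mem_erase.2 ⟨fun h => hki (congrArg Fin.val h).symm, mem_univ i⟩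
    rw [eval_mul, eval_nodal_at_node hi, mul_zero]
  · exact absurd hki (by omega)
  · exact eval_nodal_at_node (mem_univ i)

lemma prymCanPoly_eval_zero (b : Fin (g - 1) → K) (k : Fin g) :
    (prymCanPoly b k).eval 0 = if (k : ℕ) = g - 1 then (nodal univ b).eval 0 else 0 := by
  unfold prymCanPoly
  split_ifs with hk hkl hkl
  · omega
  · rw [eval_mul, eval_X, zero_mul]
  · rfl
  · omega

lemma prymCanPoly_degree_le (b : Fin (g - 1) → K) (k : Fin g) :
    (prymCanPoly b k).degree ≤ ↑(g - 1) := by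
  refine degree_le_of_natDegree_le ?_
  unfold prymCanPoly
  split_ifs with hk
  · refine natDegree_mul_le.trans ?_
    rw [natDegree_nodal, card_erase_of_mem (mem_univ _), card_univ, Fintype.card_fin]
    have := natDegree_X_le (R := K)
    omega
  · rw [natDegree_nodal, card_univ, Fintype.card_fin]

lemma mul_prod_erase_sub_ne_zero {ι : Type*} [Fintype ι] [DecidableEq ι] {b : ι → K}
    (hb : Function.Injective b) (hb0 : ∀ r, b r ≠ 0) (i : ι) :
    b i * ∏ r ∈ univ.erase i, (b i - b r) ≠ 0 :=
  mul_ne_zero (hb0 i) <| prod_ne_zero_iff.2 fun _ hr =>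
    sub_ne_zero.2 fun h => (mem_erase.1 hr).1 (hb h).symm

lemma eval_zero_nodal_ne_zero {ι : Type*} {s : Finset ι} {b : ι → K} (hb0 : ∀ r, b r ≠ 0) :
    (nodal s b).eval 0 ≠ 0 :=
  eval_nodal_not_at_node fun i _ => (hb0 i).symm

theorem linearIndependent_prymCanPoly {b : Fin (g - 1) → K} (hb : Function.Injective b)
    (hb0 : ∀ r, b r ≠ 0) : LinearIndependent K (prymCanPoly (g := g) b) := by
  rw [Fintype.linearIndependent_iff]
  intro c hc k
  by_cases hk : (k : ℕ) < g - 1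
  · have h := congrArg (eval (b ⟨k, hk⟩)) hc
    simp only [eval_finsetSum, eval_smul, smul_eq_mul, prymCanPoly_eval_node, mul_ite,
      mul_zero, eval_zero, Fin.val_inj, sum_ite_eq', mem_univ, if_true] at h
    exact (mul_eq_zero.1 h).resolve_right (mul_prod_erase_sub_ne_zero hb hb0 _)
  · have hlast : ∀ m : Fin g, (m : ℕ) = g - 1 ↔ m = k := fun m => by
      rw [← Fin.val_inj]
      omega
    have h := congrArg (eval 0) hc
    simp only [eval_finsetSum, eval_smul, smul_eq_mul, prymCanPoly_eval_zero, hlast, mul_ite,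
      mul_zero, eval_zero, sum_ite_eq', mem_univ, if_true] at h
    exact (mul_eq_zero.1 h).resolve_right (eval_zero_nodal_ne_zero hb0)

end PrymCanonical

section PrymResidue

variable {g : ℕ} {a : Fin (g - 1) × Fin 2 → ℂ}

theorem linearIndependent_prymCanSection (ha : PrymAdmissible g a) :
    LinearIndependent ℂ (prymCanSection g a) := by
  have hfst : LinearMap.fst ℂ ℂ[X] ℂ[X] ∘ prymCanSection g a = prymCanPoly fun r => a (r, 0) :=
    funext fun k => by rw [Function.comp_apply, prymCanSection_eq]; rfl
  refine LinearIndependent.of_comp (LinearMap.fst ℂ ℂ[X] ℂ[X]) ?_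
  rw [hfst]
  exact linearIndependent_prymCanPoly (ha.2 0) fun r => ha.1 (r, 0)

variable (g a) in
def prymResidueSpace : Submodule ℂ PP where
  carrier := {f : PP | f.1.degree ≤ (g - 1 : ℕ) ∧ f.2.degree ≤ (g - 1 : ℕ) ∧
    (∀ i : Fin (g - 1),
      f.1.eval (a (i, 0)) / (a (i, 0) * ∏ r ∈ Finset.univ.erase i, (a (i, 0) - a (r, 0))) +
        f.2.eval (a (i, 1)) / (a (i, 1) * ∏ r ∈ Finset.univ.erase i, (a (i, 1) - a (r, 1))) = 0) ∧
    f.1.eval 0 / (prymM g a 0).eval 0 + f.2.eval 0 / (prymM g a 1).eval 0 = 0}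
  add_mem' := by
    rintro f f' ⟨h1, h2, hnode, hzero⟩ ⟨h1', h2', hnode', hzero'⟩
    refine ⟨degree_add_le_of_degree_le h1 h1', degree_add_le_of_degree_le h2 h2',
      fun i => ?_, ?_⟩
    · simp only [Prod.fst_add, Prod.snd_add, eval_add, add_div]
      linear_combination hnode i + hnode' i
    · simp only [Prod.fst_add, Prod.snd_add, eval_add, add_div]
      linear_combination hzero + hzero'
  zero_mem' := by simp
  smul_mem' := by
    rintro c f ⟨h1, h2, hnode, hzero⟩
    refine ⟨(degree_smul_le c _).trans h1, (degree_smul_le c _).trans h2, fun i => ?_, ?_⟩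
    · simp only [Prod.smul_fst, Prod.smul_snd, eval_smul, smul_eq_mul, mul_div_assoc]
      linear_combination c * hnode i
    · simp only [Prod.smul_fst, Prod.smul_snd, eval_smul, smul_eq_mul, mul_div_assoc]
      linear_combination c * hzero

lemma prymCanSection_mem_prymResidueSpace (ha : PrymAdmissible g a) (k : Fin g) :
    prymCanSection g a k ∈ prymResidueSpace g a := by
  rw [prymCanSection_eq]
  refine ⟨prymCanPoly_degree_le _ k, (degree_neg _).trans_le (prymCanPoly_degree_le _ k),
    fun i => ?_, ?_⟩
  · simp only [eval_neg]
    rw [prymCanPoly_eval_node (fun r => a (r, 0)), prymCanPoly_eval_node (fun r => a (r, 1))]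
    split_ifs
    · rw [div_self (mul_prod_erase_sub_ne_zero (ha.2 0) (fun r => ha.1 (r, 0)) i), neg_div,
        div_self (mul_prod_erase_sub_ne_zero (ha.2 1) (fun r => ha.1 (r, 1)) i), add_neg_cancel]
    · simp
  · simp only [eval_neg]
    rw [prymCanPoly_eval_zero, prymCanPoly_eval_zero, prymM_eq_nodal, prymM_eq_nodal]
    split_ifs
    · rw [div_self (eval_zero_nodal_ne_zero fun r => ha.1 (r, 0)), neg_div,
        div_self (eval_zero_nodal_ne_zero fun r => ha.1 (r, 1)), add_neg_cancel]
    · simp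

lemma eq_zero_of_mem_prymResidueSpace (ha : PrymAdmissible g a) {f : PP}
    (hf : f ∈ prymResidueSpace g a) (h0 : f.1.eval 0 = 0) (hnode : ∀ i, f.1.eval (a (i, 0)) = 0) :
    f = 0 := by
  obtain ⟨h1, h2, hres_node, hres_zero⟩ := hf
  have hf1 : f.1 = 0 := eq_zero_of_degree_le_of_eval_zero_of_eval_eq_zero (b := fun r => a (r, 0))
    (ha.2 0) (fun r => ha.1 (r, 0)) h1 h0 hnode
  simp only [hf1, eval_zero, zero_div, zero_add, div_eq_zero_iff] at hres_node hres_zero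
  have hf2 : f.2 = 0 := eq_zero_of_degree_le_of_eval_zero_of_eval_eq_zero (b := fun r => a (r, 1))
    (ha.2 1) (fun r => ha.1 (r, 1)) h2
    (hres_zero.resolve_right (eval_zero_nodal_ne_zero fun r => ha.1 (r, 1)))
    fun i => (hres_node i).resolve_right
      (mul_prod_erase_sub_ne_zero (ha.2 1) (fun r => ha.1 (r, 1)) i)
  exact Prod.ext hf1 hf2

variable (a) in
def prymNodeValues : PP →ₗ[ℂ] (Fin (g - 1) → ℂ) × ℂ :=
  (LinearMap.pi fun i => (leval (a (i, 0))).comp (LinearMap.fst ℂ ℂ[X] ℂ[X])).prod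
    ((leval 0).comp (LinearMap.fst ℂ ℂ[X] ℂ[X]))

lemma injective_prymNodeValues_domRestrict (ha : PrymAdmissible g a) :
    Function.Injective ((prymNodeValues a).domRestrict (prymResidueSpace g a)) := by
  refine (injective_iff_map_eq_zero _).2 fun ⟨f, hf⟩ hzero => ?_
  simp only [prymNodeValues, LinearMap.domRestrict_apply, LinearMap.prod_apply,
    LinearMap.coe_comp, LinearMap.coe_fst, Function.prod_apply, Function.comp_apply, leval_apply,
    Prod.ext_iff, Prod.fst_zero, funext_iff, LinearMap.pi_apply, Pi.zero_apply,
    Prod.snd_zero] at hzero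
  exact Subtype.ext (eq_zero_of_mem_prymResidueSpace ha hf hzero.2 hzero.1)

end PrymResidue

/-- for an admissible Prym parameter system of genus `g ≥ 5`, the canonical
sections `s_1, …, s_g` are linearly independent and their span `H_g(a)` is exactly the space of
pairs of polynomials of degree `≤ g-1` satisfying the residue conditions at the nodes; in
particular `H_g(a)` has dimension `g` (it realizes `H⁰(C, ω_C)`). -/
theorem statement16 (g : ℕ) (hg : 5 ≤ g) (a : Fin (g - 1) × Fin 2 → ℂ)
    (ha : PrymAdmissible g a) :
    LinearIndependent ℂ (prymCanSection g a) ∧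
    (Hspace g a : Set PP) =
      {f : PP | f.1.degree ≤ (g - 1 : ℕ) ∧ f.2.degree ≤ (g - 1 : ℕ) ∧
        (∀ i : Fin (g - 1),
          f.1.eval (a (i, 0)) /
              (a (i, 0) * ∏ r ∈ Finset.univ.erase i, (a (i, 0) - a (r, 0))) +
            f.2.eval (a (i, 1)) /
              (a (i, 1) * ∏ r ∈ Finset.univ.erase i, (a (i, 1) - a (r, 1))) = 0) ∧
        f.1.eval 0 / (prymM g a 0).eval 0 + f.2.eval 0 / (prymM g a 1).eval 0 = 0} ∧
    Module.finrank ℂ (Hspace g a) = g := by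
  have hli := linearIndependent_prymCanSection ha
  have hfinrank : Module.finrank ℂ (Hspace g a) = g := by
    rw [Hspace, finrank_span_eq_card hli, Fintype.card_fin]
  have hle : Hspace g a ≤ prymResidueSpace g a :=
    Submodule.span_le.2 (Set.range_subset_iff.2 (prymCanSection_mem_prymResidueSpace ha))
  have hinj := injective_prymNodeValues_domRestrict ha
  have : FiniteDimensional ℂ (prymResidueSpace g a) := FiniteDimensional.of_injective _ hinj
  have hres_finrank : Module.finrank ℂ (prymResidueSpace g a) ≤ g := by
    have := LinearMap.finrank_le_finrank_of_injective hinj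
    simp only [Module.finrank_prod, Module.finrank_fin_fun, Module.finrank_self] at this
    omega
  have heq := Submodule.eq_of_le_of_finrank_le hle (hres_finrank.trans hfinrank.ge)
  exact ⟨hli, congrArg SetLike.coe heq, hfinrank⟩
end
end
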